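/- arXiv:1912.04524 — 4 statements merged into one kernel-verified Lean document; each statement's English description precedes it below -/
import Mathlib

section
/- Let W, W̃ ∈ ℝ^{n×n} be (possibly asymmetric) matrices and ε ≥ 0. Then W̃ is a directed ε-approximation of W (i.e., for all x, y ∈ ℝ^n, |x^⊤(W − W̃)y| ≤ (ε/2)·(‖x‖² + ‖y‖² − x^⊤U_W x − y^⊤U_W y)) if and only if W̃ is a complex ε-approximation of W (i.e., for all x, y ∈ ℂ^n, |x*(W − W̃)y| ≤ (ε/2)·(‖x‖² + ‖y‖² − Re(x*Wx + y*Wy))). -/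
/-!
Restricted to real vectors, the complex inequality is the directed one, since for real `x`
the sesquilinear form is the real bilinear form and `xᵀ U_W x = xᵀ W x`. Conversely, for a real
matrix `M`, `Re (x* M y) = (Re x)ᵀ M (Re y) + (Im x)ᵀ M (Im y)`, and the norms and quadratic terms
split the same way, so the directed inequality at `(Re x, Re y)` and at `(Im x, Im y)` bounds
`Re (x* (W − W̃) y)`. Multiplying `x` by a unimodular scalar turns this real part into
`|x* (W − W̃) y|` and leaves the right-hand side unchanged.
-/

open Matrix

noncomputable section

/-- The symmetrization `U_A = (A + Aᵀ)/2` of a real square matrix. -/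
def rsym {m : Type*} [Fintype m] (A : Matrix m m ℝ) : Matrix m m ℝ :=
  (1 / 2 : ℝ) • (A + Aᵀ)

/-- `W̃` is a *directed ε-approximation* of `W`:
for all real `x, y`, `|xᵀ(W − W̃)y| ≤ (ε/2)(‖x‖² + ‖y‖² − xᵀU_W x − yᵀU_W y)`. -/
def DirApprox {m : Type*} [Fintype m] (ε : ℝ) (W Wt : Matrix m m ℝ) : Prop :=
  ∀ x y : m → ℝ,
    |x ⬝ᵥ ((W - Wt) *ᵥ y)| ≤
      ε / 2 * (x ⬝ᵥ x + y ⬝ᵥ y - x ⬝ᵥ (rsym W *ᵥ x) - y ⬝ᵥ (rsym W *ᵥ y))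

/-- The sesquilinear form `x* A y`. -/
def sesq {m : Type*} [Fintype m] (A : Matrix m m ℂ) (x y : m → ℂ) : ℂ :=
  star x ⬝ᵥ (A *ᵥ y)

/-- The squared Euclidean norm of a complex vector. -/
def vnormSq {m : Type*} [Fintype m] (x : m → ℂ) : ℝ :=
  ∑ i, Complex.normSq (x i)

/-- `W̃` is a *complex ε-approximation* of `W`:
for all complex `x, y`, `|x*(W − W̃)y| ≤ (ε/2)(‖x‖² + ‖y‖² − Re(x*Wx + y*Wy))`. -/
def ComplexApprox {m : Type*} [Fintype m] (ε : ℝ) (W Wt : Matrix m m ℂ) : Prop :=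
  ∀ x y : m → ℂ,
    ‖sesq (W - Wt) x y‖ ≤
      ε / 2 * (vnormSq x + vnormSq y - (sesq W x x + sesq W y y).re)

section

variable {m : Type*} [Fintype m]

theorem dotProduct_transpose_mulVec_self {R : Type*} [CommSemiring R] (A : Matrix m m R)
    (v : m → R) : v ⬝ᵥ (Aᵀ *ᵥ v) = v ⬝ᵥ (A *ᵥ v) := by
  rw [dotProduct_mulVec, vecMul_transpose, dotProduct_comm]

theorem dotProduct_rsym_mulVec_self (A : Matrix m m ℝ) (v : m → ℝ) :
    v ⬝ᵥ (rsym A *ᵥ v) = v ⬝ᵥ (A *ᵥ v) := by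
  rw [rsym, smul_mulVec, add_mulVec, dotProduct_smul, dotProduct_add,
    dotProduct_transpose_mulVec_self, smul_eq_mul]
  ring

theorem re_sesq_map_ofReal (M : Matrix m m ℝ) (x y : m → ℂ) :
    (sesq (M.map Complex.ofReal) x y).re =
      (fun i => (x i).re) ⬝ᵥ (M *ᵥ fun i => (y i).re) +
        (fun i => (x i).im) ⬝ᵥ (M *ᵥ fun i => (y i).im) := by
  simp only [sesq, dotProduct, mulVec, map_apply, Pi.star_apply, Complex.re_sum,
    Complex.mul_re, Complex.mul_im, Complex.star_def, Complex.conj_re, Complex.conj_im,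
    Complex.ofReal_re, Complex.ofReal_im, Finset.mul_sum, ← Finset.sum_add_distrib]
  exact Finset.sum_congr rfl fun i _ => Finset.sum_congr rfl fun j _ => by ring

theorem vnormSq_eq_re_add_im (x : m → ℂ) :
    vnormSq x = (fun i => (x i).re) ⬝ᵥ (fun i => (x i).re) +
      (fun i => (x i).im) ⬝ᵥ (fun i => (x i).im) := by
  simp only [vnormSq, Complex.normSq_apply, dotProduct, Finset.sum_add_distrib]

theorem sesq_map_ofReal_ofReal (M : Matrix m m ℝ) (x y : m → ℝ) :
    sesq (M.map Complex.ofReal) (fun i => (x i : ℂ)) (fun i => (y i : ℂ)) =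
      (x ⬝ᵥ (M *ᵥ y) : ℝ) := by
  simp [sesq, dotProduct, mulVec]

theorem vnormSq_ofReal (x : m → ℝ) : vnormSq (fun i => (x i : ℂ)) = x ⬝ᵥ x := by
  simp [vnormSq, dotProduct]

theorem sesq_smul_left (A : Matrix m m ℂ) (u : ℂ) (x y : m → ℂ) :
    sesq A (u • x) y = star u * sesq A x y := by
  rw [sesq, star_smul, smul_dotProduct, smul_eq_mul, sesq]

theorem sesq_smul_smul (A : Matrix m m ℂ) (u : ℂ) (x : m → ℂ) :
    sesq A (u • x) (u • x) = Complex.normSq u * sesq A x x := by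
  rw [sesq_smul_left, sesq, mulVec_smul, dotProduct_smul, smul_eq_mul, ← sesq, ← mul_assoc,
    Complex.star_def, ← Complex.normSq_eq_conj_mul_self, mul_comm]

theorem vnormSq_smul (u : ℂ) (x : m → ℂ) : vnormSq (u • x) = Complex.normSq u * vnormSq x := by
  simp [vnormSq, Finset.mul_sum]

end

theorem Complex.exists_normSq_eq_one_star_mul_eq_norm (z : ℂ) :
    ∃ u : ℂ, Complex.normSq u = 1 ∧ star u * z = ‖z‖ := by
  set u := Complex.exp (z.arg * Complex.I)
  have hu : Complex.normSq u = 1 := by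
    rw [Complex.normSq_eq_norm_sq, Complex.norm_exp_ofReal_mul_I, one_pow]
  have hz : (‖z‖ : ℂ) * u = z := Complex.norm_mul_exp_arg_mul_I z
  refine ⟨u, hu, ?_⟩
  calc star u * z = ‖z‖ * (star u * u) := by rw [mul_left_comm, hz]
    _ = ‖z‖ := by rw [Complex.star_def, ← Complex.normSq_eq_conj_mul_self, hu]; simp

section

variable {m : Type*} [Fintype m] {ε : ℝ} {W Wt : Matrix m m ℝ}

theorem DirApprox.re_sesq_le (h : DirApprox ε W Wt) (x y : m → ℂ) :
    (sesq (W.map Complex.ofReal - Wt.map Complex.ofReal) x y).re ≤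
      ε / 2 * (vnormSq x + vnormSq y -
        (sesq (W.map Complex.ofReal) x x + sesq (W.map Complex.ofReal) y y).re) := by
  have hre := h (fun i => (x i).re) (fun i => (y i).re)
  have him := h (fun i => (x i).im) (fun i => (y i).im)
  rw [← Matrix.map_sub _ Complex.ofReal_sub, Complex.add_re, re_sesq_map_ofReal,
    re_sesq_map_ofReal, re_sesq_map_ofReal, vnormSq_eq_re_add_im, vnormSq_eq_re_add_im]
  simp only [dotProduct_rsym_mulVec_self] at hre him
  linarith [le_abs_self ((fun i => (x i).re) ⬝ᵥ ((W - Wt) *ᵥ fun i => (y i).re)),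
    le_abs_self ((fun i => (x i).im) ⬝ᵥ ((W - Wt) *ᵥ fun i => (y i).im))]

theorem DirApprox.complexApprox (h : DirApprox ε W Wt) :
    ComplexApprox ε (W.map Complex.ofReal) (Wt.map Complex.ofReal) := by
  intro x y
  obtain ⟨u, hu, hux⟩ := Complex.exists_normSq_eq_one_star_mul_eq_norm
    (sesq (W.map Complex.ofReal - Wt.map Complex.ofReal) x y)
  have hrot := h.re_sesq_le (u • x) y
  rwa [sesq_smul_left, hux, Complex.ofReal_re, sesq_smul_smul, vnormSq_smul, hu,
    Complex.ofReal_one, one_mul, one_mul] at hrot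

theorem ComplexApprox.dirApprox
    (h : ComplexApprox ε (W.map Complex.ofReal) (Wt.map Complex.ofReal)) :
    DirApprox ε W Wt := by
  intro x y
  have hreal := h (fun i => (x i : ℂ)) (fun i => (y i : ℂ))
  rw [← Matrix.map_sub _ Complex.ofReal_sub, sesq_map_ofReal_ofReal, sesq_map_ofReal_ofReal,
    sesq_map_ofReal_ofReal, Complex.norm_real, Real.norm_eq_abs, ← Complex.ofReal_add,
    Complex.ofReal_re, vnormSq_ofReal, vnormSq_ofReal] at hreal
  rwa [dotProduct_rsym_mulVec_self, dotProduct_rsym_mulVec_self, sub_sub]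

end

theorem directed_iff_complex_approx_general {n : ℕ} (ε : ℝ)
    (W Wt : Matrix (Fin n) (Fin n) ℝ) :
    DirApprox ε W Wt ↔
      ComplexApprox ε (W.map Complex.ofReal) (Wt.map Complex.ofReal) :=
  ⟨DirApprox.complexApprox, ComplexApprox.dirApprox⟩

/-- For real matrices `W, W̃` and `ε ≥ 0`, `W̃` is a directed
ε-approximation of `W` iff `W̃` (viewed as a complex matrix) is a complex
ε-approximation of `W`. -/
theorem directed_iff_complex_approx {n : ℕ} (ε : ℝ) (hε : 0 ≤ ε)
    (W Wt : Matrix (Fin n) (Fin n) ℝ) :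
    DirApprox ε W Wt ↔
      ComplexApprox ε (W.map Complex.ofReal) (Wt.map Complex.ofReal) :=
  directed_iff_complex_approx_general ε W Wt

end
end

section
/- For every ε ∈ (0,1) there exist an n ≥ 1 and symmetric, entrywise-nonnegative, doubly stochastic matrices W, W̃ ∈ ℝ^{n×n} such that W̃ is an undirected ε-approximation of W, but for every finite c > 0, W̃² is not an undirected c-approximation of W². (One may take W to be the transition matrix of a connected undirected bipartite regular graph and W̃ = (1 − ε)·W + ε·I.) -/
open Matrix

noncomputable section

/-- `W̃` is an *undirected ε-approximation* of `W` (for symmetric real matrices):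
for all real `x`, `|xᵀ(W − W̃)x| ≤ ε(‖x‖² − xᵀWx)`. -/
def UndirApprox {m : Type*} [Fintype m] (ε : ℝ) (W Wt : Matrix m m ℝ) : Prop :=
  ∀ x : m → ℝ, |x ⬝ᵥ ((W - Wt) *ᵥ x)| ≤ ε * (x ⬝ᵥ x - x ⬝ᵥ (W *ᵥ x))

/-- For every `ε ∈ (0,1)` there are symmetric doubly stochastic
matrices `W, W̃` such that `W̃` is an undirected ε-approximation of `W` but for
every finite `c > 0`, `W̃²` is not an undirected c-approximation of `W²`. -/
theorem exists_approx_not_preserved_by_squaring :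
    ∀ ε : ℝ, 0 < ε → ε < 1 →
      ∃ n : ℕ, 1 ≤ n ∧ ∃ W Wt : Matrix (Fin n) (Fin n) ℝ,
        W.IsSymm ∧ Wt.IsSymm ∧
        (∀ i j, 0 ≤ W i j) ∧ (∀ i j, 0 ≤ Wt i j) ∧
        (∀ i, ∑ j, W i j = 1) ∧ (∀ j, ∑ i, W i j = 1) ∧
        (∀ i, ∑ j, Wt i j = 1) ∧ (∀ j, ∑ i, Wt i j = 1) ∧
        UndirApprox ε W Wt ∧
        (∀ c : ℝ, 0 < c → ¬ UndirApprox c (W ^ 2) (Wt ^ 2)) := by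
  intro ε hε hε1
  refine ⟨2, by norm_num, !![0,1;1,0], !![ε,1-ε;1-ε,ε], ?_, ?_, ?_, ?_, ?_, ?_, ?_, ?_, ?_, ?_⟩
  · ext i j; fin_cases i <;> fin_cases j <;> simp [Matrix.IsSymm]
  · ext i j; fin_cases i <;> fin_cases j <;> simp [Matrix.IsSymm]
  · intro i j; fin_cases i <;> fin_cases j <;> norm_num
  · intro i j; fin_cases i <;> fin_cases j <;> simp <;> linarith
  · intro i; fin_cases i <;> simp [Fin.sum_univ_two]
  · intro j; fin_cases j <;> simp [Fin.sum_univ_two]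
  · intro i; fin_cases i <;> simp [Fin.sum_univ_two]
  · intro j; fin_cases j <;> simp [Fin.sum_univ_two]
  · intro x
    simp only [dotProduct, Matrix.mulVec, Matrix.sub_apply, Fin.sum_univ_two]
    rw [abs_le]
    norm_num
    constructor <;> nlinarith [sq_nonneg (x 0 - x 1), sq_nonneg (x 0 + x 1)]
  · intro c hc h
    have := h ![1, -1]
    rw [pow_two, pow_two] at this
    simp only [dotProduct, Matrix.mulVec, Matrix.sub_apply, Matrix.mul_apply,
      Fin.sum_univ_two, Matrix.cons_val_zero, Matrix.cons_val_one, Matrix.head_cons,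
      Matrix.of_apply] at this
    norm_num at this
    nlinarith [this]

end
end

section
/- Fix ε ∈ (0,1). Let C_4 ∈ ℝ^{4×4} be the transition matrix of the directed 4-cycle and let W̃ = (1 − ε/2)·C_4 + (ε/2)·C_4^⊤. Then W̃ is a directed ε-approximation of C_4 and −W̃ is a directed ε-approximation of −C_4, but for every finite c > 0, W̃⁴ is not a directed c-approximation of C_4⁴. -/
open Matrix

noncomputable section

/-- Transition matrix of the directed `k`-cycle: `(C_k)_{ij} = 1` iff `i ≡ j+1 (mod k)`. -/
def cycleR (k : ℕ) : Matrix (Fin k) (Fin k) ℝ :=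
  Matrix.of fun i j => if (i : ℕ) = ((j : ℕ) + 1) % k then 1 else 0

lemma aux_v3 : ((3 : Fin 4) : ℕ) = 3 := rfl
lemma aux_e10 : ((1 : Fin 4) = 0) = False := by decide
lemma aux_e20 : ((2 : Fin 4) = 0) = False := by decide
lemma aux_e30 : ((3 : Fin 4) = 0) = False := by decide

set_option maxHeartbeats 1600000 in
/-- For `ε ∈ (0,1)`, the matrix `W̃ = (1−ε/2)·C₄ + (ε/2)·C₄ᵀ` is a
directed ε-approximation of `C₄`, and `−W̃` one of `−C₄`, but for every finite
`c > 0`, `W̃⁴` is not a directed c-approximation of `C₄⁴`. -/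
theorem four_cycle_counterexample (ε : ℝ) (h0 : 0 < ε) (h1 : ε < 1) :
    DirApprox ε (cycleR 4) ((1 - ε / 2) • cycleR 4 + (ε / 2) • (cycleR 4)ᵀ) ∧
    DirApprox ε (-cycleR 4) (-((1 - ε / 2) • cycleR 4 + (ε / 2) • (cycleR 4)ᵀ)) ∧
    ∀ c : ℝ, 0 < c →
      ¬ DirApprox c ((cycleR 4) ^ 4)
          (((1 - ε / 2) • cycleR 4 + (ε / 2) • (cycleR 4)ᵀ) ^ 4) := by
  refine ⟨?_, ?_, ?_⟩
  · intro x y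
    simp only [cycleR, rsym, mulVec, dotProduct, Fin.sum_univ_four, Matrix.sub_apply,
      Matrix.add_apply, Matrix.smul_apply, Matrix.transpose_apply, Matrix.of_apply,
      smul_eq_mul, aux_v3]
    norm_num
    rw [abs_le]
    constructor
    · nlinarith [mul_nonneg h0.le (sq_nonneg (x 1 - x 3 + (y 0 - y 2))),
        mul_nonneg h0.le (sq_nonneg (x 0 - x 2 - (y 1 - y 3))),
        mul_nonneg h0.le (sq_nonneg (x 0 - x 1 + x 2 - x 3)),
        mul_nonneg h0.le (sq_nonneg (y 0 - y 1 + y 2 - y 3))]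
    · nlinarith [mul_nonneg h0.le (sq_nonneg (x 1 - x 3 - (y 0 - y 2))),
        mul_nonneg h0.le (sq_nonneg (x 0 - x 2 + (y 1 - y 3))),
        mul_nonneg h0.le (sq_nonneg (x 0 - x 1 + x 2 - x 3)),
        mul_nonneg h0.le (sq_nonneg (y 0 - y 1 + y 2 - y 3))]
  · intro x y
    simp only [cycleR, rsym, mulVec, dotProduct, Fin.sum_univ_four, Matrix.sub_apply,
      Matrix.neg_apply, Matrix.add_apply, Matrix.smul_apply, Matrix.transpose_apply,
      Matrix.of_apply, smul_eq_mul, aux_v3]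
    norm_num
    rw [abs_le]
    constructor
    · nlinarith [mul_nonneg h0.le (sq_nonneg (x 1 - x 3 + (y 0 - y 2))),
        mul_nonneg h0.le (sq_nonneg (x 0 - x 2 - (y 1 - y 3))),
        mul_nonneg h0.le (sq_nonneg (x 1 - x 3 - (y 0 - y 2))),
        mul_nonneg h0.le (sq_nonneg (x 0 - x 2 + (y 1 - y 3))),
        mul_nonneg h0.le (sq_nonneg (x 0 + x 1 + x 2 + x 3)),
        mul_nonneg h0.le (sq_nonneg (y 0 + y 1 + y 2 + y 3))]
    · nlinarith [mul_nonneg h0.le (sq_nonneg (x 1 - x 3 + (y 0 - y 2))),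
        mul_nonneg h0.le (sq_nonneg (x 0 - x 2 - (y 1 - y 3))),
        mul_nonneg h0.le (sq_nonneg (x 1 - x 3 - (y 0 - y 2))),
        mul_nonneg h0.le (sq_nonneg (x 0 - x 2 + (y 1 - y 3))),
        mul_nonneg h0.le (sq_nonneg (x 0 + x 1 + x 2 + x 3)),
        mul_nonneg h0.le (sq_nonneg (y 0 + y 1 + y 2 + y 3))]
  · intro c hc h
    have H := h (fun i => if i = 0 then 1 else 0) (fun i => if i = 0 then 1 else 0)
    simp only [show (4 : ℕ) = 3 + 1 from rfl, pow_succ, pow_zero, one_mul,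
      cycleR, rsym, Matrix.mul_apply, mulVec, dotProduct, Fin.sum_univ_four,
      Matrix.sub_apply, Matrix.add_apply, Matrix.smul_apply, Matrix.transpose_apply,
      Matrix.of_apply, smul_eq_mul, aux_v3, aux_e10, aux_e20, aux_e30, if_false, if_true] at H
    norm_num at H
    nlinarith [H, sq_nonneg ε, sq_nonneg (1 - ε), mul_pos h0 (by nlinarith : (0:ℝ) < 2 - ε)]

end
end

section
/- Let A, B, F ∈ ℝ^{n×n} with F symmetric positive semidefinite, let α ≥ 0, and suppose (I − BA)^⊤ F (I − BA) ⪯ α²·F. For m ∈ ℕ let P_m = Σ_{i=0}^{m} (I − BA)^i B. Then I − P_m A = (I − BA)^{m+1}, and consequently (I − P_m A)^⊤ F (I − P_m A) ⪯ α^{2(m+1)}·F. -/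
/-!
As a geometric sum, the error propagator `1 - P_m A` telescopes to `(1 - BA)^(m+1)`. The bound
`Mᴴ F M ≤ c • F` in the Loewner order then iterates to `(M^k)ᴴ F M^k ≤ c^k • F`, since
conjugation `X ↦ Mᴴ X M` and scaling by `c ≥ 0` are monotone.
-/

open Matrix
open scoped MatrixOrder

theorem one_sub_geom_sum_mul_mul_eq_pow {R : Type*} [Ring R] (a b : R) (k : ℕ) :
    1 - (∑ i ∈ Finset.range k, (1 - b * a) ^ i * b) * a = (1 - b * a) ^ k := by
  have hgeom := geom_sum_mul_neg (1 - b * a) k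
  rw [sub_sub_cancel] at hgeom
  rw [← Finset.sum_mul, mul_assoc, hgeom, sub_sub_cancel]

namespace Matrix

variable {𝕜 ι : Type*} [RCLike 𝕜] [Fintype ι]

theorem conjTranspose_mul_mul_le_conjTranspose_mul_mul {A B : Matrix ι ι 𝕜} (h : A ≤ B)
    (M : Matrix ι ι 𝕜) : Mᴴ * A * M ≤ Mᴴ * B * M := by
  simpa only [star_eq_conjTranspose] using star_left_conjugate_le_conjugate h M

theorem conjTranspose_pow_mul_mul_pow_le_pow_smul [DecidableEq ι] {F M : Matrix ι ι 𝕜} {c : ℝ}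
    (hc : 0 ≤ c) (h : Mᴴ * F * M ≤ c • F) (k : ℕ) : (M ^ k)ᴴ * F * M ^ k ≤ c ^ k • F := by
  induction k with
  | zero => simp
  | succ k ih =>
    calc (M ^ (k + 1))ᴴ * F * M ^ (k + 1) = Mᴴ * ((M ^ k)ᴴ * F * M ^ k) * M := by
          simp only [pow_succ, conjTranspose_mul, Matrix.mul_assoc]
      _ ≤ Mᴴ * (c ^ k • F) * M := conjTranspose_mul_mul_le_conjTranspose_mul_mul ih M
      _ = c ^ k • (Mᴴ * F * M) := by simp only [Matrix.mul_smul, Matrix.smul_mul]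
      _ ≤ c ^ k • (c • F) := smul_le_smul_of_nonneg_left h (pow_nonneg hc k)
      _ = c ^ (k + 1) • F := by rw [smul_smul, pow_succ]

end Matrix

theorem richardson_iteration_general {n : ℕ} (A B F : Matrix (Fin n) (Fin n) ℝ) (α : ℝ)
    (h : (α ^ 2 • F - (1 - B * A)ᵀ * F * (1 - B * A)).PosSemidef) (m : ℕ) :
    (1 : Matrix (Fin n) (Fin n) ℝ) -
        (∑ i ∈ Finset.range (m + 1), (1 - B * A) ^ i * B) * A =
      (1 - B * A) ^ (m + 1) ∧
    (α ^ (2 * (m + 1)) • F -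
        ((1 : Matrix (Fin n) (Fin n) ℝ) -
            (∑ i ∈ Finset.range (m + 1), (1 - B * A) ^ i * B) * A)ᵀ * F *
          ((1 : Matrix (Fin n) (Fin n) ℝ) -
            (∑ i ∈ Finset.range (m + 1), (1 - B * A) ^ i * B) * A)).PosSemidef := by
  have herror := one_sub_geom_sum_mul_mul_eq_pow A B (m + 1)
  refine ⟨herror, ?_⟩
  rw [herror, pow_mul, ← conjTranspose_eq_transpose_of_trivial, ← le_iff]
  rw [← conjTranspose_eq_transpose_of_trivial, ← le_iff] at h
  exact conjTranspose_pow_mul_mul_pow_le_pow_smul (sq_nonneg α) h (m + 1)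

/-- (Preconditioned Richardson iteration.) If `F` is PSD and
`(I − BA)ᵀ F (I − BA) ⪯ α²·F`, then for `P_m = Σ_{i=0}^m (I − BA)^i B` we have
`I − P_m A = (I − BA)^{m+1}` and `(I − P_m A)ᵀ F (I − P_m A) ⪯ α^{2(m+1)}·F`. -/
theorem richardson_iteration {n : ℕ} (A B F : Matrix (Fin n) (Fin n) ℝ)
    (hF : F.PosSemidef) (α : ℝ) (hα : 0 ≤ α)
    (h : (α ^ 2 • F - (1 - B * A)ᵀ * F * (1 - B * A)).PosSemidef) (m : ℕ) :
    (1 : Matrix (Fin n) (Fin n) ℝ) -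
        (∑ i ∈ Finset.range (m + 1), (1 - B * A) ^ i * B) * A =
      (1 - B * A) ^ (m + 1) ∧
    (α ^ (2 * (m + 1)) • F -
        ((1 : Matrix (Fin n) (Fin n) ℝ) -
            (∑ i ∈ Finset.range (m + 1), (1 - B * A) ^ i * B) * A)ᵀ * F *
          ((1 : Matrix (Fin n) (Fin n) ℝ) -
            (∑ i ∈ Finset.range (m + 1), (1 - B * A) ^ i * B) * A)).PosSemidef :=
  richardson_iteration_general A B F α h m
end
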